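/- arXiv:2212.14707 — 3 statements merged into one kernel-verified Lean document; each statement's English description precedes it below -/
import Mathlib

section
/- Let ω > 0, q > 0, T ∈ (0, ∞], and let V : [0, T) → ℝ be continuous, nonnegative, differentiable on (0, T), and satisfy V′(t) ≤ −2ω·V(t) + q·V(t)^(3/2) for all t ∈ (0, T). If √(V(0)) < 2ω/q, then for every t ∈ [0, T), V(t) ≤ V(0)·e^(−2ωt) / (1 − (q/(2ω))·√(V(0)))². -/
open Real Set Filter Topology

/-!
The equation `y' = -2ω y + q y^(3/2)` is of Bernoulli type: `z = y^(-1/2)` satisfies the linear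
equation `z' = ω z - q/2`, so it has explicit solutions, and the one starting at `a²` with
`q a < 2ω` stays below `a² e^(-2ωt) / (1 - (q/(2ω)) a)²`. For `a > √(V 0)` and a slightly
larger `q`, such a solution is a strict upper fence for `V`, so `V` never crosses it. Letting the
perturbation tend to zero gives the bound.
-/

theorem image_le_of_left_lt_of_deriv_lt_deriv_boundary {f B B' : ℝ → ℝ} {a b : ℝ}
    (hf : ContinuousOn f (Icc a b)) (hf' : ∀ x ∈ Ioo a b, DifferentiableAt ℝ f x)
    (ha : f a < B a) (hB : ∀ x, HasDerivAt B (B' x) x)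
    (bound : ∀ x ∈ Ioo a b, f x = B x → deriv f x < B' x) :
    ∀ ⦃x⦄, x ∈ Icc a b → f x ≤ B x := by
  rintro x ⟨hax, hxb⟩
  rcases hax.eq_or_lt with rfl | hax
  · exact ha.le
  have hfB : ContinuousWithinAt (fun y => B y - f y) (Ioo a x) a :=
    (hB a).continuousAt.continuousWithinAt.sub <| (hf a ⟨le_rfl, hax.le.trans hxb⟩).mono
      (Ioo_subset_Icc_self.trans (Icc_subset_Icc_right hxb))
  have := left_nhdsWithin_Ioo_neBot hax
  obtain ⟨s, hfs, has, hsx⟩ : ∃ s, 0 < B s - f s ∧ a < s ∧ s < x :=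
    ((hfB.eventually (lt_mem_nhds (sub_pos.2 ha))).and self_mem_nhdsWithin).exists
  have hsub : Ico s x ⊆ Ioo a b := Ico_subset_Ioo_left has |>.trans (Ioo_subset_Ioo_right hxb)
  exact image_le_of_deriv_right_lt_deriv_boundary (hf.mono (Icc_subset_Icc has.le hxb))
    (fun y hy => (hf' y (hsub hy)).hasDerivAt.hasDerivWithinAt) (by linarith) hB
    (fun y hy => bound y (hsub hy)) ⟨hsx.le, le_rfl⟩

/-- The solution of `y' = -2ω y + q y^(3/2)`, `y 0 = a²`, written through `y^(-1/2)`. -/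
noncomputable def bernoulliSolution (ω q a t : ℝ) : ℝ :=
  ((a⁻¹ - q / (2 * ω)) * exp (ω * t) + q / (2 * ω))⁻¹ ^ 2

theorem bernoulliSolution_zero (ω q a : ℝ) : bernoulliSolution ω q a 0 = a ^ 2 := by
  simp [bernoulliSolution]

theorem inv_sub_div_pos_of_mul_lt {ω q a : ℝ} (hω : 0 < ω) (ha : 0 < a) (hqa : q * a < 2 * ω) :
    0 < a⁻¹ - q / (2 * ω) := by
  rw [sub_pos, div_lt_iff₀ (by positivity), inv_mul_eq_div, lt_div_iff₀ ha]
  linarith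

section

variable {ω q a : ℝ}

theorem bernoulliSolution_denom_pos (hω : 0 < ω) (hq : 0 ≤ q) (hk : 0 < a⁻¹ - q / (2 * ω))
    (t : ℝ) : 0 < (a⁻¹ - q / (2 * ω)) * exp (ω * t) + q / (2 * ω) := by
  have := mul_pos hk (exp_pos (ω * t))
  positivity

theorem bernoulliSolution_pos (hω : 0 < ω) (hq : 0 ≤ q) (hk : 0 < a⁻¹ - q / (2 * ω)) (t : ℝ) :
    0 < bernoulliSolution ω q a t := by
  have := bernoulliSolution_denom_pos hω hq hk t
  unfold bernoulliSolution
  positivity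

theorem hasDerivAt_bernoulliSolution (hω : 0 < ω) (hq : 0 ≤ q) (hk : 0 < a⁻¹ - q / (2 * ω))
    (t : ℝ) :
    HasDerivAt (bernoulliSolution ω q a)
      (-2 * ω * bernoulliSolution ω q a t + q * bernoulliSolution ω q a t ^ ((3 : ℝ) / 2)) t := by
  set c := q / (2 * ω) with hc
  set z := (a⁻¹ - c) * exp (ω * t) + c with hz_def
  have hz : 0 < z := bernoulliSolution_denom_pos hω hq hk t
  have hdz : HasDerivAt (fun s => (a⁻¹ - c) * exp (ω * s) + c) (ω * (z - c)) t := by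
    refine ((((hasDerivAt_id' t).const_mul ω).exp.const_mul _).add_const c).congr_deriv ?_
    rw [hz_def]
    ring
  have h32 : (z⁻¹ ^ 2) ^ ((3 : ℝ) / 2) = z⁻¹ ^ 3 := by
    rw [← rpow_natCast, ← rpow_mul (by positivity)]
    norm_num
  refine ((hdz.fun_inv hz.ne').fun_pow 2).congr_deriv ?_
  rw [← hz_def]
  change _ = -2 * ω * z⁻¹ ^ 2 + q * (z⁻¹ ^ 2) ^ ((3 : ℝ) / 2)
  rw [h32, show q = 2 * ω * c by rw [hc]; field_simp]
  clear_value c z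
  norm_num
  field_simp
  ring

theorem bernoulliSolution_le (hω : 0 < ω) (hq : 0 ≤ q) (ha : 0 < a) (hk : 0 < a⁻¹ - q / (2 * ω))
    (t : ℝ) :
    bernoulliSolution ω q a t ≤ a ^ 2 * exp (-2 * ω * t) / (1 - q / (2 * ω) * a) ^ 2 := by
  have hke : 0 < (a⁻¹ - q / (2 * ω)) * exp (ω * t) := mul_pos hk (exp_pos _)
  have hca : 1 - q / (2 * ω) * a ≠ 0 := by
    rw [← inv_mul_cancel₀ ha.ne', ← sub_mul]
    exact (mul_pos hk ha).ne'
  calc bernoulliSolution ω q a t ≤ ((a⁻¹ - q / (2 * ω)) * exp (ω * t))⁻¹ ^ 2 := by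
        unfold bernoulliSolution
        gcongr
        exact le_add_of_nonneg_right (by positivity)
    _ = a ^ 2 * exp (-2 * ω * t) / (1 - q / (2 * ω) * a) ^ 2 := by
        rw [show -2 * ω * t = (2 : ℕ) * -(ω * t) by push_cast; ring, exp_nat_mul, exp_neg]
        field_simp

end

theorem le_bernoulliSolution {V : ℝ → ℝ} {ω q₀ q a b : ℝ} (hω : 0 < ω) (hq : 0 ≤ q)
    (hq₀ : q₀ < q) (hk : 0 < a⁻¹ - q / (2 * ω)) (hV0 : V 0 < a ^ 2)
    (hcont : ContinuousOn V (Icc 0 b)) (hdiff : ∀ t ∈ Ioo 0 b, DifferentiableAt ℝ V t)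
    (hineq : ∀ t ∈ Ioo 0 b, deriv V t ≤ -2 * ω * V t + q₀ * V t ^ ((3 : ℝ) / 2)) :
    ∀ t ∈ Icc 0 b, V t ≤ bernoulliSolution ω q a t := by
  refine image_le_of_left_lt_of_deriv_lt_deriv_boundary hcont hdiff
    (by rwa [bernoulliSolution_zero]) (hasDerivAt_bernoulliSolution hω hq hk) fun t ht hVt => ?_
  have hpos := rpow_pos_of_pos (bernoulliSolution_pos hω hq hk t) ((3 : ℝ) / 2)
  calc deriv V t ≤ -2 * ω * V t + q₀ * V t ^ ((3 : ℝ) / 2) := hineq t ht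
    _ < _ := by rw [hVt]; gcongr

theorem nonlinear_gronwall_general (ω q : ℝ) (hω : 0 < ω) (hq : 0 < q)
    (T : EReal) (V : ℝ → ℝ)
    (hcont : ContinuousOn V {t : ℝ | 0 ≤ t ∧ (t : EReal) < T})
    (hnonneg : ∀ t : ℝ, 0 ≤ t → (t : EReal) < T → 0 ≤ V t)
    (hdiff : ∀ t : ℝ, 0 < t → (t : EReal) < T → DifferentiableAt ℝ V t)
    (hineq : ∀ t : ℝ, 0 < t → (t : EReal) < T →
      deriv V t ≤ -2 * ω * V t + q * V t ^ ((3 : ℝ) / 2))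
    (hinit : Real.sqrt (V 0) < 2 * ω / q) :
    ∀ t : ℝ, 0 ≤ t → (t : EReal) < T →
      V t ≤ V 0 * Real.exp (-2 * ω * t) / (1 - q / (2 * ω) * Real.sqrt (V 0)) ^ 2 := by
  intro t ht htT
  have hT' : ∀ s ≤ t, (s : EReal) < T := fun s hs => (EReal.coe_le_coe_iff.2 hs).trans_lt htT
  have hV0 : 0 ≤ V 0 := hnonneg 0 le_rfl (hT' 0 ht)
  set x := √(V 0)
  let G : ℝ → ℝ := fun ε => (x + ε) ^ 2 * exp (-2 * ω * t) / (1 - (q + ε) / (2 * ω) * (x + ε)) ^ 2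
  have hbound : ∀ ε > 0, (q + ε) * (x + ε) < 2 * ω → V t ≤ G ε := fun ε hε hsmall =>
    have hk := inv_sub_div_pos_of_mul_lt hω (by positivity) hsmall
    (le_bernoulliSolution hω (by positivity) (lt_add_of_pos_right q hε) hk
      (by rw [← sq_sqrt hV0]; gcongr; linarith) (hcont.mono fun s hs => ⟨hs.1, hT' s hs.2⟩)
      (fun s hs => hdiff s hs.1 (hT' s hs.2.le)) (fun s hs => hineq s hs.1 (hT' s hs.2.le))
      t ⟨ht, le_rfl⟩).trans (bernoulliSolution_le hω (by positivity) (by positivity) hk t)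
  have hqx : q * x < 2 * ω := (lt_div_iff₀' hq).1 hinit
  have hsmall : ∀ᶠ ε in 𝓝[>] 0, (q + ε) * (x + ε) < 2 * ω := by
    have : ContinuousAt (fun ε => (q + ε) * (x + ε)) 0 := by fun_prop
    exact nhdsWithin_le_nhds (this.eventually (gt_mem_nhds (by simpa using hqx)))
  have hG : ContinuousAt G 0 := by
    have hca : 0 < 1 - q / (2 * ω) * x := by
      rw [sub_pos, div_mul_eq_mul_div, div_lt_one (by positivity)]
      exact hqx
    fun_prop (disch := simp [hω.ne', hca.ne'])
  have := ge_of_tendsto (hG.tendsto.mono_left nhdsWithin_le_nhds)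
    ((hsmall.and self_mem_nhdsWithin).mono fun ε h => hbound ε h.2 h.1)
  simpa [G, x, sq_sqrt hV0] using this

/-- Nonlinear Gronwall-type estimate: if `V ≥ 0` is continuous on `[0, T)`, differentiable on
`(0, T)` with `V' ≤ -2ω V + q V^(3/2)` there, and `√(V 0) < 2ω/q`, then
`V t ≤ V 0 · e^(-2ωt) / (1 - (q/(2ω))√(V 0))²` on `[0, T)`. Here `T ∈ (0, ∞]`. -/
theorem nonlinear_gronwall (ω q : ℝ) (hω : 0 < ω) (hq : 0 < q)
    (T : EReal) (hT : 0 < T) (V : ℝ → ℝ)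
    (hcont : ContinuousOn V {t : ℝ | 0 ≤ t ∧ (t : EReal) < T})
    (hnonneg : ∀ t : ℝ, 0 ≤ t → (t : EReal) < T → 0 ≤ V t)
    (hdiff : ∀ t : ℝ, 0 < t → (t : EReal) < T → DifferentiableAt ℝ V t)
    (hineq : ∀ t : ℝ, 0 < t → (t : EReal) < T →
      deriv V t ≤ -2 * ω * V t + q * V t ^ ((3 : ℝ) / 2))
    (hinit : Real.sqrt (V 0) < 2 * ω / q) :
    ∀ t : ℝ, 0 ≤ t → (t : EReal) < T →
      V t ≤ V 0 * Real.exp (-2 * ω * t) / (1 - q / (2 * ω) * Real.sqrt (V 0)) ^ 2 :=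
  nonlinear_gronwall_general ω q hω hq T V hcont hnonneg hdiff hineq hinit
end

section
/- Let h1, …, h10 be positive reals, let n, b95, γ18, γ19, C*, b3, b4, b5, b6, X3*, X4*, X5*, X6* be positive reals, and let y1, …, y10 be reals. Let V ≥ 0 be a real number satisfying h_j·y_j² ≤ V for every j = 1, …, 10. Define U03 = 2h1·n·b95·y1·y5·y9 + 2h1·(−γ18·y8 + γ19·C*·y9 + γ19·C*·y10)·y1² − 2h3·b3·X3*·y2·y3·y5 − 2h4·b4·X4*·y2·y4·y6 − 2h5·b5·X5*·y2·y3·y5 − 2h6·b6·X6*·y2·y4·y6 − 2h9·b95·y5·y9² + 2h10·b95·y5·y9·y10, and define q = 2·( n·b95·√h1/√(h5·h9) + γ18/√h8 + γ19·C*/√h9 + γ19·C*/√h10 + b3·X3*·√h3/√(h2·h5) + b4·X4*·√h4/√(h2·h6) + b5·X5*·√h5/√(h2·h3) + b6·X6*·√h6/√(h2·h4) + b95/√h5 + b95·√h10/√(h5·h9) ). Then U03 ≤ q·V^(3/2). -/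
/-! Each of the ten cubic monomials of `U03` is a product of three factors `y_j`, each satisfying
`√h_j |y_j| ≤ √V` (or of one factor `h_j y_j² ≤ V` and one such `y_k`); the resulting bound
`K · V √V` is multiplied by the monomial's positive coefficient, and the ten bounds are summed. -/

open Real

lemma sqrt_mul_abs_le_sqrt_of_mul_sq_le {h y V : ℝ} (hh : 0 ≤ h) (hy : h * y ^ 2 ≤ V) :
    √h * |y| ≤ √V := by
  rw [← sqrt_sq_eq_abs, ← sqrt_mul hh]
  exact sqrt_le_sqrt hy

lemma rpow_three_halves_eq_mul_sqrt {V : ℝ} (hV : 0 ≤ V) : V ^ (3 / 2 : ℝ) = V * √V := by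
  rw [sqrt_eq_rpow, ← rpow_one_add' hV (by norm_num)]
  norm_num

lemma abs_mul_mul_mul_le {a b c x y z V : ℝ} (ha : 0 ≤ a) (hb : 0 < b) (hc : 0 < c)
    (hx : a * x ^ 2 ≤ V) (hy : b * y ^ 2 ≤ V) (hz : c * z ^ 2 ≤ V) :
    |a * x * y * z| ≤ √a / √(b * c) * (V * √V) := by
  have hV : 0 ≤ V := (mul_nonneg ha (sq_nonneg x)).trans hx
  have hprod : √a * |x| * (√b * |y|) * (√c * |z|) ≤ √V * √V * √V := by
    gcongr
    exacts [sqrt_mul_abs_le_sqrt_of_mul_sq_le ha hx, sqrt_mul_abs_le_sqrt_of_mul_sq_le hb.le hy,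
      sqrt_mul_abs_le_sqrt_of_mul_sq_le hc.le hz]
  calc |a * x * y * z| = √a / √(b * c) * (√a * |x| * (√b * |y|) * (√c * |z|)) := by
        rw [abs_mul, abs_mul, abs_mul, abs_of_nonneg ha, sqrt_mul hb.le]
        field_simp
        rw [sq_sqrt ha]
        ring
    _ ≤ √a / √(b * c) * (√V * √V * √V) := by gcongr
    _ = √a / √(b * c) * (V * √V) := by rw [mul_self_sqrt hV]

lemma abs_mul_sq_mul_le {a b x y V : ℝ} (ha : 0 ≤ a) (hb : 0 < b)
    (hx : a * x ^ 2 ≤ V) (hy : b * y ^ 2 ≤ V) :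
    |a * x ^ 2 * y| ≤ V * √V / √b := by
  have hV : 0 ≤ V := (mul_nonneg ha (sq_nonneg x)).trans hx
  have hy' : |y| ≤ √V / √b :=
    (le_div_iff₀' (sqrt_pos.2 hb)).2 (sqrt_mul_abs_le_sqrt_of_mul_sq_le hb.le hy)
  calc |a * x ^ 2 * y| = a * x ^ 2 * |y| := by
        rw [abs_mul, abs_of_nonneg (by positivity : 0 ≤ a * x ^ 2)]
    _ ≤ V * (√V / √b) := by gcongr
    _ = V * √V / √b := mul_div_assoc' _ _ _

theorem U03_estimate_general
    (h1 h2 h3 h4 h5 h6 h8 h9 h10 : ℝ)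
    (hh1 : 0 < h1) (hh2 : 0 < h2) (hh3 : 0 < h3) (hh4 : 0 < h4) (hh5 : 0 < h5)
    (hh6 : 0 < h6) (hh8 : 0 < h8) (hh9 : 0 < h9) (hh10 : 0 < h10)
    (n b95 g18 g19 Cs b3 b4 b5 b6 X3s X4s X5s X6s : ℝ)
    (hn : 0 < n) (hb95 : 0 < b95) (hg18 : 0 < g18) (hg19 : 0 < g19) (hCs : 0 < Cs)
    (hb3 : 0 < b3) (hb4 : 0 < b4) (hb5 : 0 < b5) (hb6 : 0 < b6)
    (hX3 : 0 < X3s) (hX4 : 0 < X4s) (hX5 : 0 < X5s) (hX6 : 0 < X6s)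
    (y1 y2 y3 y4 y5 y6 y8 y9 y10 : ℝ) (V : ℝ) (hV : 0 ≤ V)
    (hd1 : h1 * y1 ^ 2 ≤ V) (hd2 : h2 * y2 ^ 2 ≤ V) (hd3 : h3 * y3 ^ 2 ≤ V)
    (hd4 : h4 * y4 ^ 2 ≤ V) (hd5 : h5 * y5 ^ 2 ≤ V) (hd6 : h6 * y6 ^ 2 ≤ V)
    (hd8 : h8 * y8 ^ 2 ≤ V) (hd9 : h9 * y9 ^ 2 ≤ V)
    (hd10 : h10 * y10 ^ 2 ≤ V)
    (U03 q : ℝ)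
    (hU03 : U03 = 2 * h1 * n * b95 * y1 * y5 * y9
      + 2 * h1 * (-g18 * y8 + g19 * Cs * y9 + g19 * Cs * y10) * y1 ^ 2
      - 2 * h3 * b3 * X3s * y2 * y3 * y5
      - 2 * h4 * b4 * X4s * y2 * y4 * y6
      - 2 * h5 * b5 * X5s * y2 * y3 * y5
      - 2 * h6 * b6 * X6s * y2 * y4 * y6
      - 2 * h9 * b95 * y5 * y9 ^ 2
      + 2 * h10 * b95 * y5 * y9 * y10)
    (hq : q = 2 * (n * b95 * Real.sqrt h1 / Real.sqrt (h5 * h9)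
      + g18 / Real.sqrt h8
      + g19 * Cs / Real.sqrt h9
      + g19 * Cs / Real.sqrt h10
      + b3 * X3s * Real.sqrt h3 / Real.sqrt (h2 * h5)
      + b4 * X4s * Real.sqrt h4 / Real.sqrt (h2 * h6)
      + b5 * X5s * Real.sqrt h5 / Real.sqrt (h2 * h3)
      + b6 * X6s * Real.sqrt h6 / Real.sqrt (h2 * h4)
      + b95 / Real.sqrt h5
      + b95 * Real.sqrt h10 / Real.sqrt (h5 * h9))) :
    U03 ≤ q * V ^ ((3 : ℝ) / 2) := by
  have t1 := abs_mul_mul_mul_le hh1.le hh5 hh9 hd1 hd5 hd9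
  have t2 := abs_mul_sq_mul_le hh1.le hh8 hd1 hd8
  have t3 := abs_mul_sq_mul_le hh1.le hh9 hd1 hd9
  have t4 := abs_mul_sq_mul_le hh1.le hh10 hd1 hd10
  have t5 := abs_mul_mul_mul_le hh3.le hh2 hh5 hd3 hd2 hd5
  have t6 := abs_mul_mul_mul_le hh4.le hh2 hh6 hd4 hd2 hd6
  have t7 := abs_mul_mul_mul_le hh5.le hh2 hh3 hd5 hd2 hd3
  have t8 := abs_mul_mul_mul_le hh6.le hh2 hh4 hd6 hd2 hd4
  have t9 := abs_mul_sq_mul_le hh9.le hh5 hd9 hd5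
  have t10 := abs_mul_mul_mul_le hh10.le hh5 hh9 hd10 hd5 hd9
  rw [hU03, hq, rpow_three_halves_eq_mul_sqrt hV]
  linear_combination (2 * n * b95) * le_of_abs_le t1 + (2 * g18) * neg_le_of_abs_le t2
    + (2 * g19 * Cs) * le_of_abs_le t3 + (2 * g19 * Cs) * le_of_abs_le t4
    + (2 * b3 * X3s) * neg_le_of_abs_le t5 + (2 * b4 * X4s) * neg_le_of_abs_le t6
    + (2 * b5 * X5s) * neg_le_of_abs_le t7 + (2 * b6 * X6s) * neg_le_of_abs_le t8
    + (2 * b95) * neg_le_of_abs_le t9 + (2 * b95) * le_of_abs_le t10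

/-- The cubic terms `U03` in the derivative of the Lyapunov–Krasovskii functional are bounded
by `q · V^(3/2)` whenever `h_j y_j² ≤ V` for every `j`. -/
theorem U03_estimate
    (h1 h2 h3 h4 h5 h6 h7 h8 h9 h10 : ℝ)
    (hh1 : 0 < h1) (hh2 : 0 < h2) (hh3 : 0 < h3) (hh4 : 0 < h4) (hh5 : 0 < h5)
    (hh6 : 0 < h6) (hh7 : 0 < h7) (hh8 : 0 < h8) (hh9 : 0 < h9) (hh10 : 0 < h10)
    (n b95 g18 g19 Cs b3 b4 b5 b6 X3s X4s X5s X6s : ℝ)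
    (hn : 0 < n) (hb95 : 0 < b95) (hg18 : 0 < g18) (hg19 : 0 < g19) (hCs : 0 < Cs)
    (hb3 : 0 < b3) (hb4 : 0 < b4) (hb5 : 0 < b5) (hb6 : 0 < b6)
    (hX3 : 0 < X3s) (hX4 : 0 < X4s) (hX5 : 0 < X5s) (hX6 : 0 < X6s)
    (y1 y2 y3 y4 y5 y6 y7 y8 y9 y10 : ℝ) (V : ℝ) (hV : 0 ≤ V)
    (hd1 : h1 * y1 ^ 2 ≤ V) (hd2 : h2 * y2 ^ 2 ≤ V) (hd3 : h3 * y3 ^ 2 ≤ V)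
    (hd4 : h4 * y4 ^ 2 ≤ V) (hd5 : h5 * y5 ^ 2 ≤ V) (hd6 : h6 * y6 ^ 2 ≤ V)
    (hd7 : h7 * y7 ^ 2 ≤ V) (hd8 : h8 * y8 ^ 2 ≤ V) (hd9 : h9 * y9 ^ 2 ≤ V)
    (hd10 : h10 * y10 ^ 2 ≤ V)
    (U03 q : ℝ)
    (hU03 : U03 = 2 * h1 * n * b95 * y1 * y5 * y9
      + 2 * h1 * (-g18 * y8 + g19 * Cs * y9 + g19 * Cs * y10) * y1 ^ 2
      - 2 * h3 * b3 * X3s * y2 * y3 * y5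
      - 2 * h4 * b4 * X4s * y2 * y4 * y6
      - 2 * h5 * b5 * X5s * y2 * y3 * y5
      - 2 * h6 * b6 * X6s * y2 * y4 * y6
      - 2 * h9 * b95 * y5 * y9 ^ 2
      + 2 * h10 * b95 * y5 * y9 * y10)
    (hq : q = 2 * (n * b95 * Real.sqrt h1 / Real.sqrt (h5 * h9)
      + g18 / Real.sqrt h8
      + g19 * Cs / Real.sqrt h9
      + g19 * Cs / Real.sqrt h10
      + b3 * X3s * Real.sqrt h3 / Real.sqrt (h2 * h5)
      + b4 * X4s * Real.sqrt h4 / Real.sqrt (h2 * h6)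
      + b5 * X5s * Real.sqrt h5 / Real.sqrt (h2 * h3)
      + b6 * X6s * Real.sqrt h6 / Real.sqrt (h2 * h4)
      + b95 / Real.sqrt h5
      + b95 * Real.sqrt h10 / Real.sqrt (h5 * h9))) :
    U03 ≤ q * V ^ ((3 : ℝ) / 2) :=
  U03_estimate_general h1 h2 h3 h4 h5 h6 h8 h9 h10 hh1 hh2 hh3 hh4 hh5 hh6 hh8 hh9 hh10 n b95 g18
    g19 Cs b3 b4 b5 b6 X3s X4s X5s X6s hn hb95 hg18 hg19 hCs hb3 hb4 hb5 hb6 hX3 hX4 hX5 hX6 y1 y2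
    y3 y4 y5 y6 y8 y9 y10 V hV hd1 hd2 hd3 hd4 hd5 hd6 hd8 hd9 hd10 U03 q hU03 hq
end

section
/- Under the constant setup below, define additionally ε1 = ((a11−a99)+√((a11−a99)²+4·a19·a91))/(2·a19), ε2 = (α2−δ)/(γ21·M), ε9 = 1/ε1, ε59 = (α5−δ)/(b59·X5*), ε87 = (α8−δ)/ρ8, ε81 = (α8−δ)·α8/(γ81·ρ8·X7*), ε10 = 2(α10−δ)/a99. Then each of the following ten quantities is ≥ 2δ: p1 = 2a11 − ε1·a19 − (1/ε9)·a91·(h9/h1) − (1/ε2)·γ21·M·(h2/h1) − (1/ε81)·γ81·(ρ8/α8)·X7*·(h8/h1); p2 = 2α2 − ε2·γ21·M − Σ_{k=3}^{7} β_k·(h_k/h2) − (1/ε3)·(b32+b3·X5*)·X3*·(h3/h2) − (1/ε4)·(b42+b4·X6*)·X4*·(h4/h2) − (1/ε5)·b5·X3*·X5*·(h5/h2) − (1/ε6)·b6·X4*·X6*·(h6/h2); p3 = 2α3 − (e^(æ3τ3)/β3)·(b32·ρ32)²·(X3*+θ3)² − ε3·(b32+b3·X5*)·X3*; p4 = 2α4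 − (e^(æ4τ4)/β4)·(b42·ρ42)²·(X4*+θ4)² − ε4·(b42+b4·X6*)·X4*; p5 = 2α5 − (e^(æ5τ5)/β5)·(b5·ρ5)²·(X3*+θ3)²·(X5*+θ5)² − ε5·b5·X3*·X5* − ε59·b59·X5*; p6 = 2α6 − (e^(æ6τ6)/β6)·(b6·ρ6)²·(X4*+θ4)²·(X6*+θ6)² − ε6·b6·X4*·X6*; p7 = 2α7 − (e^(æ7τ7)/β7)·(b7·ρ7)²·(X4*+θ4)²·(X6*+θ6)² − (1/ε87)·ρ8·(h8/h7); p8 = 2α8 − ε87·ρ8 − ε81·γ81·(ρ8/α8)·X7*; p9 = 2a99 − ε9·a91 − (1/ε1)·a19·(h1/h9) − (1/ε59)·b59·X5*·(h5/h9) − (1/ε10)·a99·(h10/h9); p10 = 2α10 − ε10·a99. Consequently, for all reals y1,…,y10, the quadratic form U01 + W01 + W02 = −Σ_{j=1}^{10} h_j·p_j·y_j² is bounded above by −2δ·Σ_{j=1}^{10} h_j·y_j². -/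
/-!
Every cross term `2 c yᵢ yⱼ` of `U01 + W01 + W02` is split by Young's inequality
`2 c yᵢ yⱼ ≤ ε c yᵢ² + c yⱼ² / ε`, and the constants `ε`, `β` and the weights `h` are tuned so
that for `j ≠ 1, 9` the losses on the `j`-th diagonal entry add up to exactly `2 (αⱼ - δ)`,
i.e. `pⱼ = 2δ`. The coordinates `y₁, y₉` are coupled through the block `[[a11, -a19], [-a91, a99]]`:
`ε₁` is the positive root of `a19 x² - (a11 - a99) x - a91`, which makes both `a11 - ε₁ a19` and
`a99 - a91 / ε₁` equal to the smaller eigenvalue `ε` of that block, and `h₁` is chosen so large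
that the remaining losses are at most `2 (ε - δ)`. The bound on the quadratic form is then termwise.
-/

open Real

lemma exp_div_mul_sq_eq (u t ε : ℝ) :
    exp t / (u * exp (t / 2) / ε) * u ^ 2 = ε * (u * exp (t / 2)) := by
  have hexp : exp t = exp (t / 2) ^ 2 := by rw [← exp_nat_mul]; ring_nf
  rcases eq_or_ne u 0 with rfl | hu
  · simp
  rcases eq_or_ne ε 0 with rfl | hε
  · simp
  rw [hexp]
  field_simp

/-- The Young constants `ε`, `β` and the weight `h` of a delayed coordinate: its own diagonal
entry loses exactly `k`, and its two cross terms with `y₂` cost `y₂` exactly `1 / h`. -/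
lemma delay_split_eq {u r t k c D ε β h : ℝ} (hc : c = u * exp (t / 2)) (hD : D = c + r)
    (hε : ε = k / D) (hβ : β = c / ε) (hh : h = k / D ^ 2) (hu : 0 < u) (hr : 0 ≤ r)
    (hk : 0 < k) :
    exp t / β * u ^ 2 + ε * r = k ∧ β * h + 1 / ε * r * h = 1 ∧ 0 < h := by
  have hD0 : 0 < D := by rw [hD, hc]; positivity
  refine ⟨?_, ?_, by rw [hh]; positivity⟩
  · rw [hβ, hc, exp_div_mul_sq_eq, ← hc, ← mul_add, ← hD, hε, div_mul_cancel₀ _ hD0.ne']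
  · rw [hβ, hh, hε]
    field_simp
    rw [hD]

/-- `x` is the positive root of `b x² - (a - d) x - c` and `e` the smaller eigenvalue of
`[[a, -b], [-c, d]]`. -/
lemma eigen_shift_eq {a b c d x e : ℝ} (hb : 0 < b) (hc : 0 < c)
    (he : e = (a + d - √((a - d) ^ 2 + 4 * b * c)) / 2)
    (hx : x = ((a - d) + √((a - d) ^ 2 + 4 * b * c)) / (2 * b)) :
    0 < x ∧ a - x * b = e ∧ d - c / x = e := by
  set s := √((a - d) ^ 2 + 4 * b * c)
  have hs : s ^ 2 = (a - d) ^ 2 + 4 * b * c := sq_sqrt (by positivity)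
  have hnum : 0 < (a - d) + s := by
    nlinarith [sqrt_nonneg ((a - d) ^ 2 + 4 * b * c), mul_pos hb hc]
  have hx0 : 0 < x := hx ▸ by positivity
  have hcx : c / x = (s - (a - d)) / 2 := by
    rw [div_eq_iff hx0.ne', hx]
    field_simp
    linear_combination -hs
  refine ⟨hx0, ?_, ?_⟩
  · rw [he, hx]; field_simp; ring
  · rw [he, hcx]; ring

lemma two_mul_le_coupled_diag {a d b c e δ x y h h' m P₁ P₂ Q₁ Q₂ p q : ℝ} (hb : 0 < b)
    (hc : 0 < c) (hδ : δ < e) (he : e = (a + d - √((a - d) ^ 2 + 4 * b * c)) / 2)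
    (hx : x = ((a - d) + √((a - d) ^ 2 + 4 * b * c)) / (2 * b)) (hy : y = 1 / x)
    (hh0 : 0 < h) (hh : h = 1 / (2 * (e - δ)) * m) (hh' : h' = h * b / c)
    (hp : p = 2 * a - x * b - 1 / y * c * (h' / h) - P₁ - P₂)
    (hq : q = 2 * d - y * c - 1 / x * b * (h / h') - Q₁ - Q₂)
    (hP : (P₁ + P₂) * h ≤ m) (hQ : (Q₁ + Q₂) * h ≤ m) :
    2 * δ ≤ p ∧ 2 * δ ≤ q := by
  obtain ⟨hx0, hxa, hxd⟩ := eigen_shift_eq hb hc he hx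
  have hmh : m / h = 2 * (e - δ) := by
    have := (sub_pos.2 hδ).ne'
    rw [div_eq_iff hh0.ne', hh]; field_simp
  have hPm : P₁ + P₂ ≤ m / h := (le_div_iff₀ hh0).2 hP
  have hQm : Q₁ + Q₂ ≤ m / h := (le_div_iff₀ hh0).2 hQ
  have hcross : 1 / y * c * (h' / h) = x * b := by rw [hy, hh']; field_simp
  have hcross' : 1 / x * b * (h / h') = y * c := by rw [hy, hh']; field_simp
  constructor
  · rw [hp, hcross]; linarith
  · rw [hq, hcross', hy, one_div_mul_eq_div]; linarith

lemma two_mul_mul_le_mul_mul_sq {δ h p : ℝ} (hh : 0 ≤ h) (hp : 2 * δ ≤ p) (y : ℝ) :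
    2 * δ * (h * y ^ 2) ≤ h * p * y ^ 2 := by
  nlinarith [mul_nonneg hh (sq_nonneg y)]

theorem diagonal_estimate_general
    (ν n b95 γ21 γ81 M Cs σ b10 : ℝ)
    (b32 ρ32 b3 b42 ρ42 b4 b5 ρ5 b59 b6 ρ6 b7 ρ7 ρ8 : ℝ)
    (α2 α3 α4 α5 α6 α7 α8 α10 : ℝ)
    (X3s X4s X5s X6s X7s : ℝ)
    (τ3 τ4 τ5 τ6 τ7 : ℝ)
    (hν : 0 < ν) (hn : 0 < n) (hb95 : 0 < b95)
    (hγ21 : 0 < γ21) (hγ81 : 0 < γ81) (hM : 0 < M) (hCs : 0 < Cs)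
    (hσ : 0 < σ) (hb10 : 0 < b10) (hb32 : 0 < b32) (hρ32 : 0 < ρ32) (hb3 : 0 < b3)
    (hb42 : 0 < b42) (hρ42 : 0 < ρ42) (hb4 : 0 < b4) (hb5 : 0 < b5) (hρ5 : 0 < ρ5)
    (hb59 : 0 < b59) (hb6 : 0 < b6) (hρ6 : 0 < ρ6) (hb7 : 0 < b7) (hρ7 : 0 < ρ7)
    (hρ8 : 0 < ρ8) (hα8 : 0 < α8)
    (hX3 : 0 < X3s) (hX4 : 0 < X4s) (hX5 : 0 < X5s) (hX6 : 0 < X6s) (hX7 : 0 < X7s)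
    (a11 a99 a19 a91 : ℝ)
    (ha99 : a99 = b95 * X5s + b10)
    (ha19 : a19 = ν + n * b95 * X5s)
    (ha91 : a91 = σ * Cs)
    (ε : ℝ) (hε : ε = (a11 + a99 - Real.sqrt ((a11 - a99) ^ 2 + 4 * a19 * a91)) / 2)
    (δ : ℝ)
    (hδ : δ < min ε (min α2 (min α3 (min α4 (min α5 (min α6 (min α7 (min α8 α10))))))))
    (κ3 κ4 κ5 κ6 κ7 : ℝ)
    (θ3 θ4 θ5 θ6 : ℝ) (hθ3 : 0 < θ3) (hθ4 : 0 < θ4) (hθ5 : 0 < θ5) (hθ6 : 0 < θ6)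
    (D3 D4 D5 D6 D7 : ℝ)
    (hD3 : D3 = b32 * ρ32 * (X3s + θ3) * Real.exp (κ3 * τ3 / 2) + (b32 + b3 * X5s) * X3s)
    (hD4 : D4 = b42 * ρ42 * (X4s + θ4) * Real.exp (κ4 * τ4 / 2) + (b42 + b4 * X6s) * X4s)
    (hD5 : D5 = b5 * ρ5 * (X3s + θ3) * (X5s + θ5) * Real.exp (κ5 * τ5 / 2) + b5 * X3s * X5s)
    (hD6 : D6 = b6 * ρ6 * (X4s + θ4) * (X6s + θ6) * Real.exp (κ6 * τ6 / 2) + b6 * X4s * X6s)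
    (hD7 : D7 = b7 * ρ7 * (X4s + θ4) * (X6s + θ6) * Real.exp (κ7 * τ7 / 2))
    (ε3 ε4 ε5 ε6 ε7 : ℝ)
    (hε3 : ε3 = 2 * (α3 - δ) / D3) (hε4 : ε4 = 2 * (α4 - δ) / D4)
    (hε5 : ε5 = (α5 - δ) / D5) (hε6 : ε6 = 2 * (α6 - δ) / D6) (hε7 : ε7 = (α7 - δ) / D7)
    (β3 β4 β5 β6 β7 : ℝ)
    (hβ3 : β3 = b32 * ρ32 * (X3s + θ3) * Real.exp (κ3 * τ3 / 2) / ε3)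
    (hβ4 : β4 = b42 * ρ42 * (X4s + θ4) * Real.exp (κ4 * τ4 / 2) / ε4)
    (hβ5 : β5 = b5 * ρ5 * (X3s + θ3) * (X5s + θ5) * Real.exp (κ5 * τ5 / 2) / ε5)
    (hβ6 : β6 = b6 * ρ6 * (X4s + θ4) * (X6s + θ6) * Real.exp (κ6 * τ6 / 2) / ε6)
    (hβ7 : β7 = D7 / ε7)
    (h1 h2 h3 h4 h5 h6 h7 h8 h9 h10 : ℝ)
    (hh1 : h1 = 1 / (2 * (ε - δ)) *
      max ((a91 / a19) * ((b59 * X5s) ^ 2 / D5 ^ 2 + 1))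
        (5 * (γ21 * M) ^ 2 / (α2 - δ) ^ 2
          + (γ81 * (ρ8 / α8) * X7s) ^ 2 * (α7 - δ) ^ 2 / (ρ8 ^ 2 * D7 ^ 2)))
    (hh2 : h2 = 5 / (α2 - δ))
    (hh3 : h3 = 2 * (α3 - δ) / D3 ^ 2)
    (hh4 : h4 = 2 * (α4 - δ) / D4 ^ 2)
    (hh5 : h5 = (α5 - δ) / D5 ^ 2)
    (hh6 : h6 = 2 * (α6 - δ) / D6 ^ 2)
    (hh7 : h7 = (α7 - δ) / D7 ^ 2)
    (hh8 : h8 = (α7 - δ) ^ 2 * (α8 - δ) / (ρ8 ^ 2 * D7 ^ 2))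
    (hh9 : h9 = h1 * a19 / a91)
    (hh10 : h10 = 2 * (α10 - δ) / a99 ^ 2)
    (ε1 ε2 ε9 ε59 ε87 ε81 ε10 : ℝ)
    (hε1 : ε1 = ((a11 - a99) + Real.sqrt ((a11 - a99) ^ 2 + 4 * a19 * a91)) / (2 * a19))
    (hε2 : ε2 = (α2 - δ) / (γ21 * M))
    (hε9 : ε9 = 1 / ε1)
    (hε59 : ε59 = (α5 - δ) / (b59 * X5s))
    (hε87 : ε87 = (α8 - δ) / ρ8)
    (hε81 : ε81 = (α8 - δ) * α8 / (γ81 * ρ8 * X7s))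
    (hε10 : ε10 = 2 * (α10 - δ) / a99)
    (p1 p2 p3 p4 p5 p6 p7 p8 p9 p10 : ℝ)
    (hp1 : p1 = 2 * a11 - ε1 * a19 - 1 / ε9 * a91 * (h9 / h1)
      - 1 / ε2 * γ21 * M * (h2 / h1) - 1 / ε81 * γ81 * (ρ8 / α8) * X7s * (h8 / h1))
    (hp2 : p2 = 2 * α2 - ε2 * γ21 * M
      - (β3 * (h3 / h2) + β4 * (h4 / h2) + β5 * (h5 / h2) + β6 * (h6 / h2) + β7 * (h7 / h2))
      - 1 / ε3 * ((b32 + b3 * X5s) * X3s) * (h3 / h2)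
      - 1 / ε4 * ((b42 + b4 * X6s) * X4s) * (h4 / h2)
      - 1 / ε5 * (b5 * X3s * X5s) * (h5 / h2)
      - 1 / ε6 * (b6 * X4s * X6s) * (h6 / h2))
    (hp3 : p3 = 2 * α3 - Real.exp (κ3 * τ3) / β3 * (b32 * ρ32) ^ 2 * (X3s + θ3) ^ 2
      - ε3 * ((b32 + b3 * X5s) * X3s))
    (hp4 : p4 = 2 * α4 - Real.exp (κ4 * τ4) / β4 * (b42 * ρ42) ^ 2 * (X4s + θ4) ^ 2
      - ε4 * ((b42 + b4 * X6s) * X4s))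
    (hp5 : p5 = 2 * α5
      - Real.exp (κ5 * τ5) / β5 * (b5 * ρ5) ^ 2 * (X3s + θ3) ^ 2 * (X5s + θ5) ^ 2
      - ε5 * (b5 * X3s * X5s) - ε59 * (b59 * X5s))
    (hp6 : p6 = 2 * α6
      - Real.exp (κ6 * τ6) / β6 * (b6 * ρ6) ^ 2 * (X4s + θ4) ^ 2 * (X6s + θ6) ^ 2
      - ε6 * (b6 * X4s * X6s))
    (hp7 : p7 = 2 * α7
      - Real.exp (κ7 * τ7) / β7 * (b7 * ρ7) ^ 2 * (X4s + θ4) ^ 2 * (X6s + θ6) ^ 2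
      - 1 / ε87 * ρ8 * (h8 / h7))
    (hp8 : p8 = 2 * α8 - ε87 * ρ8 - ε81 * γ81 * (ρ8 / α8) * X7s)
    (hp9 : p9 = 2 * a99 - ε9 * a91 - 1 / ε1 * a19 * (h1 / h9)
      - 1 / ε59 * (b59 * X5s) * (h5 / h9) - 1 / ε10 * a99 * (h10 / h9))
    (hp10 : p10 = 2 * α10 - ε10 * a99) :
    (2 * δ ≤ p1 ∧ 2 * δ ≤ p2 ∧ 2 * δ ≤ p3 ∧ 2 * δ ≤ p4 ∧ 2 * δ ≤ p5 ∧
      2 * δ ≤ p6 ∧ 2 * δ ≤ p7 ∧ 2 * δ ≤ p8 ∧ 2 * δ ≤ p9 ∧ 2 * δ ≤ p10) ∧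
    ∀ y1 y2 y3 y4 y5 y6 y7 y8 y9 y10 : ℝ,
      -(h1 * p1 * y1 ^ 2 + h2 * p2 * y2 ^ 2 + h3 * p3 * y3 ^ 2 + h4 * p4 * y4 ^ 2
        + h5 * p5 * y5 ^ 2 + h6 * p6 * y6 ^ 2 + h7 * p7 * y7 ^ 2 + h8 * p8 * y8 ^ 2
        + h9 * p9 * y9 ^ 2 + h10 * p10 * y10 ^ 2)
      ≤ -(2 * δ) * (h1 * y1 ^ 2 + h2 * y2 ^ 2 + h3 * y3 ^ 2 + h4 * y4 ^ 2
        + h5 * y5 ^ 2 + h6 * y6 ^ 2 + h7 * y7 ^ 2 + h8 * y8 ^ 2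
        + h9 * y9 ^ 2 + h10 * y10 ^ 2) := by
  simp only [lt_min_iff] at hδ
  obtain ⟨hδε, hδ2, hδ3, hδ4, hδ5, hδ6, hδ7, hδ8, hδ10⟩ := hδ
  have ha19p : 0 < a19 := by rw [ha19]; positivity
  have ha91p : 0 < a91 := by rw [ha91]; positivity
  have ha99p : 0 < a99 := by rw [ha99]; positivity
  have hh1p : 0 < h1 := by rw [hh1]; positivity
  obtain ⟨hp1', hp9'⟩ : 2 * δ ≤ p1 ∧ 2 * δ ≤ p9 := by
    refine two_mul_le_coupled_diag ha19p ha91p hδε hε hε1 hε9 hh1p hh1 hh9 hp1 hp9 ?_ ?_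
    · refine le_of_eq_of_le ?_ (le_max_right _ _)
      rw [hε2, hh2, hε81, hh8]; field_simp
    · refine le_of_eq_of_le ?_ (le_max_left _ _)
      rw [hh9, hε59, hh5, hε10, hh10]; field_simp
  obtain ⟨e3, s3, hh3p⟩ := delay_split_eq rfl hD3 hε3 hβ3 hh3
    (by positivity) (by positivity) (by positivity)
  obtain ⟨e4, s4, hh4p⟩ := delay_split_eq rfl hD4 hε4 hβ4 hh4
    (by positivity) (by positivity) (by positivity)
  obtain ⟨e5, s5, hh5p⟩ := delay_split_eq rfl hD5 hε5 hβ5 hh5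
    (by positivity) (by positivity) (by positivity)
  obtain ⟨e6, s6, hh6p⟩ := delay_split_eq rfl hD6 hε6 hβ6 hh6
    (by positivity) (by positivity) (by positivity)
  obtain ⟨e7, s7, hh7p⟩ := delay_split_eq hD7 (add_zero D7).symm hε7 hβ7 hh7
    (by positivity) le_rfl (by positivity)
  have hp2' : 2 * δ ≤ p2 := by
    have e2 : ε2 * (γ21 * M) = α2 - δ := by rw [hε2]; exact div_mul_cancel₀ _ (by positivity)
    have e2' : 5 / h2 = α2 - δ := by rw [hh2]; exact div_div_cancel₀ (by norm_num)
    rw [hp2]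
    linear_combination e2 + (s3 + s4 + s5 + s6 + s7) / h2 + e2'
  have hp3' : 2 * δ ≤ p3 := by rw [hp3]; linear_combination e3
  have hp4' : 2 * δ ≤ p4 := by rw [hp4]; linear_combination e4
  have hp5' : 2 * δ ≤ p5 := by
    have e59 : ε59 * (b59 * X5s) = α5 - δ := by rw [hε59]; exact div_mul_cancel₀ _ (by positivity)
    rw [hp5]; linear_combination e5 + e59
  have hp6' : 2 * δ ≤ p6 := by rw [hp6]; linear_combination e6
  have hp7' : 2 * δ ≤ p7 := by
    have e8 : 1 / ε87 * ρ8 * (h8 / h7) = α7 - δ := by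
      have : D7 ≠ 0 := by rw [hD7]; positivity
      rw [hε87, hh8, hh7]; field_simp
    rw [hp7]; linear_combination e7 + e8
  have hp8' : 2 * δ ≤ p8 := by
    have e87 : ε87 * ρ8 = α8 - δ := by rw [hε87]; exact div_mul_cancel₀ _ hρ8.ne'
    have e81 : ε81 * γ81 * (ρ8 / α8) * X7s = α8 - δ := by rw [hε81]; field_simp
    rw [hp8]; linear_combination e87 + e81
  have hp10' : 2 * δ ≤ p10 := by
    rw [hp10, hε10, div_mul_cancel₀ _ ha99p.ne']; linarith
  refine ⟨⟨hp1', hp2', hp3', hp4', hp5', hp6', hp7', hp8', hp9', hp10'⟩, ?_⟩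
  intro y1 y2 y3 y4 y5 y6 y7 y8 y9 y10
  obtain ⟨hh2p, hh8p, hh9p, hh10p⟩ : 0 ≤ h2 ∧ 0 ≤ h8 ∧ 0 ≤ h9 ∧ 0 ≤ h10 := by
    rw [hh2, hh8, hh9, hh10]; refine ⟨?_, ?_, ?_, ?_⟩ <;> positivity
  linarith [two_mul_mul_le_mul_mul_sq hh1p.le hp1' y1, two_mul_mul_le_mul_mul_sq hh2p hp2' y2,
    two_mul_mul_le_mul_mul_sq hh3p.le hp3' y3, two_mul_mul_le_mul_mul_sq hh4p.le hp4' y4,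
    two_mul_mul_le_mul_mul_sq hh5p.le hp5' y5, two_mul_mul_le_mul_mul_sq hh6p.le hp6' y6,
    two_mul_mul_le_mul_mul_sq hh7p.le hp7' y7, two_mul_mul_le_mul_mul_sq hh8p hp8' y8,
    two_mul_mul_le_mul_mul_sq hh9p hp9' y9, two_mul_mul_le_mul_mul_sq hh10p hp10' y10]

/-- The diagonal quantities `p_1, …, p_10` built from the choices of `ε`-parameters,
`β_k` and `h_j` in the Lyapunov–Krasovskii construction all satisfy `p_j ≥ 2δ`, and hence
the quadratic form `U01 + W01 + W02 = -Σ h_j p_j y_j²` is bounded by `-2δ Σ h_j y_j²`. -/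
theorem diagonal_estimate
    (ν n b95 γ12 γ18 γ19 γ21 γ81 M Cs σ b10 : ℝ)
    (b32 ρ32 b3 b42 ρ42 b4 b5 ρ5 b59 b6 ρ6 b7 ρ7 ρ8 : ℝ)
    (α2 α3 α4 α5 α6 α7 α8 α10 : ℝ)
    (X3s X4s X5s X6s X7s : ℝ)
    (τ3 τ4 τ5 τ6 τ7 : ℝ)
    (hν : 0 < ν) (hn : 0 < n) (hb95 : 0 < b95) (hγ12 : 0 < γ12) (hγ18 : 0 < γ18)
    (hγ19 : 0 < γ19) (hγ21 : 0 < γ21) (hγ81 : 0 < γ81) (hM : 0 < M) (hCs : 0 < Cs)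
    (hσ : 0 < σ) (hb10 : 0 < b10) (hb32 : 0 < b32) (hρ32 : 0 < ρ32) (hb3 : 0 < b3)
    (hb42 : 0 < b42) (hρ42 : 0 < ρ42) (hb4 : 0 < b4) (hb5 : 0 < b5) (hρ5 : 0 < ρ5)
    (hb59 : 0 < b59) (hb6 : 0 < b6) (hρ6 : 0 < ρ6) (hb7 : 0 < b7) (hρ7 : 0 < ρ7)
    (hρ8 : 0 < ρ8) (hα2 : 0 < α2) (hα3 : 0 < α3) (hα4 : 0 < α4) (hα5 : 0 < α5)
    (hα6 : 0 < α6) (hα7 : 0 < α7) (hα8 : 0 < α8) (hα10 : 0 < α10)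
    (hX3 : 0 < X3s) (hX4 : 0 < X4s) (hX5 : 0 < X5s) (hX6 : 0 < X6s) (hX7 : 0 < X7s)
    (hτ3 : 0 < τ3) (hτ4 : 0 < τ4) (hτ5 : 0 < τ5) (hτ6 : 0 < τ6) (hτ7 : 0 < τ7)
    (a11 a99 a19 a91 : ℝ)
    (ha11 : a11 = γ12 * M + γ18 * (ρ8 / α8) * X7s + γ19 * Cs)
    (ha99 : a99 = b95 * X5s + b10)
    (ha19 : a19 = ν + n * b95 * X5s)
    (ha91 : a91 = σ * Cs)
    (hstab : a19 * a91 < a11 * a99)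
    (ε : ℝ) (hε : ε = (a11 + a99 - Real.sqrt ((a11 - a99) ^ 2 + 4 * a19 * a91)) / 2)
    (δ : ℝ) (hδ0 : 0 < δ)
    (hδ : δ < min ε (min α2 (min α3 (min α4 (min α5 (min α6 (min α7 (min α8 α10))))))))
    (κ3 κ4 κ5 κ6 κ7 : ℝ)
    (hκ3 : 0 < κ3) (hκ4 : 0 < κ4) (hκ5 : 0 < κ5) (hκ6 : 0 < κ6) (hκ7 : 0 < κ7)
    (θ3 θ4 θ5 θ6 : ℝ) (hθ3 : 0 < θ3) (hθ4 : 0 < θ4) (hθ5 : 0 < θ5) (hθ6 : 0 < θ6)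
    (D3 D4 D5 D6 D7 : ℝ)
    (hD3 : D3 = b32 * ρ32 * (X3s + θ3) * Real.exp (κ3 * τ3 / 2) + (b32 + b3 * X5s) * X3s)
    (hD4 : D4 = b42 * ρ42 * (X4s + θ4) * Real.exp (κ4 * τ4 / 2) + (b42 + b4 * X6s) * X4s)
    (hD5 : D5 = b5 * ρ5 * (X3s + θ3) * (X5s + θ5) * Real.exp (κ5 * τ5 / 2) + b5 * X3s * X5s)
    (hD6 : D6 = b6 * ρ6 * (X4s + θ4) * (X6s + θ6) * Real.exp (κ6 * τ6 / 2) + b6 * X4s * X6s)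
    (hD7 : D7 = b7 * ρ7 * (X4s + θ4) * (X6s + θ6) * Real.exp (κ7 * τ7 / 2))
    (ε3 ε4 ε5 ε6 ε7 : ℝ)
    (hε3 : ε3 = 2 * (α3 - δ) / D3) (hε4 : ε4 = 2 * (α4 - δ) / D4)
    (hε5 : ε5 = (α5 - δ) / D5) (hε6 : ε6 = 2 * (α6 - δ) / D6) (hε7 : ε7 = (α7 - δ) / D7)
    (β3 β4 β5 β6 β7 : ℝ)
    (hβ3 : β3 = b32 * ρ32 * (X3s + θ3) * Real.exp (κ3 * τ3 / 2) / ε3)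
    (hβ4 : β4 = b42 * ρ42 * (X4s + θ4) * Real.exp (κ4 * τ4 / 2) / ε4)
    (hβ5 : β5 = b5 * ρ5 * (X3s + θ3) * (X5s + θ5) * Real.exp (κ5 * τ5 / 2) / ε5)
    (hβ6 : β6 = b6 * ρ6 * (X4s + θ4) * (X6s + θ6) * Real.exp (κ6 * τ6 / 2) / ε6)
    (hβ7 : β7 = D7 / ε7)
    (h1 h2 h3 h4 h5 h6 h7 h8 h9 h10 : ℝ)
    (hh1 : h1 = 1 / (2 * (ε - δ)) *
      max ((a91 / a19) * ((b59 * X5s) ^ 2 / D5 ^ 2 + 1))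
        (5 * (γ21 * M) ^ 2 / (α2 - δ) ^ 2
          + (γ81 * (ρ8 / α8) * X7s) ^ 2 * (α7 - δ) ^ 2 / (ρ8 ^ 2 * D7 ^ 2)))
    (hh2 : h2 = 5 / (α2 - δ))
    (hh3 : h3 = 2 * (α3 - δ) / D3 ^ 2)
    (hh4 : h4 = 2 * (α4 - δ) / D4 ^ 2)
    (hh5 : h5 = (α5 - δ) / D5 ^ 2)
    (hh6 : h6 = 2 * (α6 - δ) / D6 ^ 2)
    (hh7 : h7 = (α7 - δ) / D7 ^ 2)
    (hh8 : h8 = (α7 - δ) ^ 2 * (α8 - δ) / (ρ8 ^ 2 * D7 ^ 2))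
    (hh9 : h9 = h1 * a19 / a91)
    (hh10 : h10 = 2 * (α10 - δ) / a99 ^ 2)
    (ε1 ε2 ε9 ε59 ε87 ε81 ε10 : ℝ)
    (hε1 : ε1 = ((a11 - a99) + Real.sqrt ((a11 - a99) ^ 2 + 4 * a19 * a91)) / (2 * a19))
    (hε2 : ε2 = (α2 - δ) / (γ21 * M))
    (hε9 : ε9 = 1 / ε1)
    (hε59 : ε59 = (α5 - δ) / (b59 * X5s))
    (hε87 : ε87 = (α8 - δ) / ρ8)
    (hε81 : ε81 = (α8 - δ) * α8 / (γ81 * ρ8 * X7s))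
    (hε10 : ε10 = 2 * (α10 - δ) / a99)
    (p1 p2 p3 p4 p5 p6 p7 p8 p9 p10 : ℝ)
    (hp1 : p1 = 2 * a11 - ε1 * a19 - 1 / ε9 * a91 * (h9 / h1)
      - 1 / ε2 * γ21 * M * (h2 / h1) - 1 / ε81 * γ81 * (ρ8 / α8) * X7s * (h8 / h1))
    (hp2 : p2 = 2 * α2 - ε2 * γ21 * M
      - (β3 * (h3 / h2) + β4 * (h4 / h2) + β5 * (h5 / h2) + β6 * (h6 / h2) + β7 * (h7 / h2))
      - 1 / ε3 * ((b32 + b3 * X5s) * X3s) * (h3 / h2)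
      - 1 / ε4 * ((b42 + b4 * X6s) * X4s) * (h4 / h2)
      - 1 / ε5 * (b5 * X3s * X5s) * (h5 / h2)
      - 1 / ε6 * (b6 * X4s * X6s) * (h6 / h2))
    (hp3 : p3 = 2 * α3 - Real.exp (κ3 * τ3) / β3 * (b32 * ρ32) ^ 2 * (X3s + θ3) ^ 2
      - ε3 * ((b32 + b3 * X5s) * X3s))
    (hp4 : p4 = 2 * α4 - Real.exp (κ4 * τ4) / β4 * (b42 * ρ42) ^ 2 * (X4s + θ4) ^ 2
      - ε4 * ((b42 + b4 * X6s) * X4s))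
    (hp5 : p5 = 2 * α5
      - Real.exp (κ5 * τ5) / β5 * (b5 * ρ5) ^ 2 * (X3s + θ3) ^ 2 * (X5s + θ5) ^ 2
      - ε5 * (b5 * X3s * X5s) - ε59 * (b59 * X5s))
    (hp6 : p6 = 2 * α6
      - Real.exp (κ6 * τ6) / β6 * (b6 * ρ6) ^ 2 * (X4s + θ4) ^ 2 * (X6s + θ6) ^ 2
      - ε6 * (b6 * X4s * X6s))
    (hp7 : p7 = 2 * α7
      - Real.exp (κ7 * τ7) / β7 * (b7 * ρ7) ^ 2 * (X4s + θ4) ^ 2 * (X6s + θ6) ^ 2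
      - 1 / ε87 * ρ8 * (h8 / h7))
    (hp8 : p8 = 2 * α8 - ε87 * ρ8 - ε81 * γ81 * (ρ8 / α8) * X7s)
    (hp9 : p9 = 2 * a99 - ε9 * a91 - 1 / ε1 * a19 * (h1 / h9)
      - 1 / ε59 * (b59 * X5s) * (h5 / h9) - 1 / ε10 * a99 * (h10 / h9))
    (hp10 : p10 = 2 * α10 - ε10 * a99) :
    (2 * δ ≤ p1 ∧ 2 * δ ≤ p2 ∧ 2 * δ ≤ p3 ∧ 2 * δ ≤ p4 ∧ 2 * δ ≤ p5 ∧
      2 * δ ≤ p6 ∧ 2 * δ ≤ p7 ∧ 2 * δ ≤ p8 ∧ 2 * δ ≤ p9 ∧ 2 * δ ≤ p10) ∧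
    ∀ y1 y2 y3 y4 y5 y6 y7 y8 y9 y10 : ℝ,
      -(h1 * p1 * y1 ^ 2 + h2 * p2 * y2 ^ 2 + h3 * p3 * y3 ^ 2 + h4 * p4 * y4 ^ 2
        + h5 * p5 * y5 ^ 2 + h6 * p6 * y6 ^ 2 + h7 * p7 * y7 ^ 2 + h8 * p8 * y8 ^ 2
        + h9 * p9 * y9 ^ 2 + h10 * p10 * y10 ^ 2)
      ≤ -(2 * δ) * (h1 * y1 ^ 2 + h2 * y2 ^ 2 + h3 * y3 ^ 2 + h4 * y4 ^ 2
        + h5 * y5 ^ 2 + h6 * y6 ^ 2 + h7 * y7 ^ 2 + h8 * y8 ^ 2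
        + h9 * y9 ^ 2 + h10 * y10 ^ 2) :=
  diagonal_estimate_general ν n b95 γ21 γ81 M Cs σ b10 b32 ρ32 b3 b42 ρ42 b4 b5 ρ5 b59 b6 ρ6 b7 ρ7
    ρ8 α2 α3 α4 α5 α6 α7 α8 α10 X3s X4s X5s X6s X7s τ3 τ4 τ5 τ6 τ7 hν hn hb95 hγ21 hγ81 hM hCs hσ
    hb10 hb32 hρ32 hb3 hb42 hρ42 hb4 hb5 hρ5 hb59 hb6 hρ6 hb7 hρ7 hρ8 hα8 hX3 hX4 hX5 hX6 hX7 a11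
    a99 a19 a91 ha99 ha19 ha91 ε hε δ hδ κ3 κ4 κ5 κ6 κ7 θ3 θ4 θ5 θ6 hθ3 hθ4 hθ5 hθ6 D3 D4 D5 D6 D7
    hD3 hD4 hD5 hD6 hD7 ε3 ε4 ε5 ε6 ε7 hε3 hε4 hε5 hε6 hε7 β3 β4 β5 β6 β7 hβ3 hβ4 hβ5 hβ6 hβ7 h1 h2
    h3 h4 h5 h6 h7 h8 h9 h10 hh1 hh2 hh3 hh4 hh5 hh6 hh7 hh8 hh9 hh10 ε1 ε2 ε9 ε59 ε87 ε81 ε10 hε1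
    hε2 hε9 hε59 hε87 hε81 hε10 p1 p2 p3 p4 p5 p6 p7 p8 p9 p10 hp1 hp2 hp3 hp4 hp5 hp6 hp7 hp8 hp9
    hp10
end
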